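/- arXiv:2205.08562 — 2 statements merged into one kernel-verified Lean document; each statement's English description precedes it below -/
import Mathlib

section
/- Let r^1,...,r^T ∈ [-1,1]^N be reward vectors, β^1,...,β^T ∈ Δ([N]) be distributions, and π : [N] → [N] a swap function such that Σ_t Σ_j β^t_j r^t_{π(j)} − Σ_t Σ_j β^t_j r^t_j = R. Define a bimatrix game with optimizer actions [T] and learner actions [N] by u_L(i,j) = r^i_j and u_O(i,j) = (r^i_{π(j)} − r^i_j)/2. Then for any mixed strategy α ∈ Δ([T]) of the optimizer and any best response j ∈ [N] of the learner (maximizing u_L(α,·)), we have u_O(α,j) ≤ 0; hence the Stackelberg value of this game is at most 0, while the optimizer playing action t in round t against the sequence β^t obtains total payoff R/2. -/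
open Finset

/-
A learner best-responding with `j` cannot gain by deviating to `π j`, and the optimizer's payoff
is half of exactly that gain.
-/

lemma sum_mul_sub_div_two {ι : Type*} [Fintype ι] (w f g : ι → ℝ) :
    ∑ i, w i * ((f i - g i) / 2) = (∑ i, w i * f i - ∑ i, w i * g i) / 2 := by
  rw [← sum_sub_distrib, sum_div]
  exact sum_congr rfl fun i _ => by ring

theorem stmt0_general (T N : ℕ) (r : Fin T → Fin N → ℝ)
    (β : Fin T → Fin N → ℝ)
    (π : Fin N → Fin N) (R : ℝ)
    (hR : (∑ t, ∑ j, β t j * r t (π j)) - (∑ t, ∑ j, β t j * r t j) = R)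
    (uL uO : Fin T → Fin N → ℝ)
    (huL : ∀ i j, uL i j = r i j)
    (huO : ∀ i j, uO i j = (r i (π j) - r i j) / 2) :
    (∀ α : Fin T → ℝ, (∀ i, 0 ≤ α i) → (∑ i, α i = 1) →
      ∀ j : Fin N, (∀ j' : Fin N, ∑ i, α i * uL i j' ≤ ∑ i, α i * uL i j) →
        ∑ i, α i * uO i j ≤ 0) ∧
    (∑ t, ∑ j, β t j * uO t j) = R / 2 := by
  simp only [huL, huO, sum_mul_sub_div_two]
  refine ⟨fun α _ _ j hbr => ?_, ?_⟩
  · linarith [hbr (π j)]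
  · rw [← sum_div, sum_sub_distrib, hR]

theorem stmt0 (T N : ℕ) (r : Fin T → Fin N → ℝ)
    (hr : ∀ t j, |r t j| ≤ 1)
    (β : Fin T → Fin N → ℝ)
    (hβ0 : ∀ t j, 0 ≤ β t j) (hβ1 : ∀ t, ∑ j, β t j = 1)
    (π : Fin N → Fin N) (R : ℝ)
    (hR : (∑ t, ∑ j, β t j * r t (π j)) - (∑ t, ∑ j, β t j * r t j) = R)
    (uL uO : Fin T → Fin N → ℝ)
    (huL : ∀ i j, uL i j = r i j)
    (huO : ∀ i j, uO i j = (r i (π j) - r i j) / 2) :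
    (∀ α : Fin T → ℝ, (∀ i, 0 ≤ α i) → (∑ i, α i = 1) →
      ∀ j : Fin N, (∀ j' : Fin N, ∑ i, α i * uL i j' ≤ ∑ i, α i * uL i j) →
        ∑ i, α i * uO i j ≤ 0) ∧
    (∑ t, ∑ j, β t j * uO t j) = R / 2 :=
  stmt0_general T N r β π R hR uL uO huL huO
end

section
/- Let P ⊆ [-1,1]^d be a polytope, r^1,...,r^T ∈ [-1,1]^d, x^1,...,x^T ∈ P, and M a linear map with M(P) ⊆ P satisfying Σ_t ⟨r^t, M x^t⟩ − Σ_t ⟨r^t, x^t⟩ = R. Define the P-game with optimizer action set Q = { (y, (1/(λ+1))(M−I)^⊤ y) : y ∈ [-1,1]^d } where λ ≥ ||M||_1. Then: (a) Q ⊆ [-1,1]^d × [-1,1]^d; (b) the Stackelberg value of this game is at most 0 (for any (r, s) ∈ Q and any learner best response x maximizing ⟨r,x⟩ over P, the optimizer payoff ⟨s,x⟩ is ≤ 0); and (c) the optimizer playing (r^t, (1/(λ+1))(M−I)^⊤ r^t) in round t against the sequence x^t obtains total payoff R/(λ+1). -/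
/-!
Since `(M - 1)ᵀ` is the adjoint of `M - 1`, the optimizer's payoff `⟨(M - 1)ᵀ y, z⟩` equals
`⟨y, M z⟩ - ⟨y, z⟩`, the learner's gain from replacing `z` by `M z`. At a best response this
gain is nonpositive because `M z ∈ P`, and summed over the rounds it is exactly `R`. The bound
`λ ≥ ‖M‖₁` on the column sums gives `‖(M - 1)ᵀ y‖_∞ ≤ λ + 1` on the cube.
-/

open Finset

/-- Standard inner product on `Fin d → ℝ`. -/
def dot {d : ℕ} (a b : Fin d → ℝ) : ℝ := ∑ i, a i * b i

open scoped Matrix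

section

variable {d : ℕ}

theorem dot_eq_dotProduct (a b : Fin d → ℝ) : dot a b = a ⬝ᵥ b := rfl

theorem dot_of_isEmpty [IsEmpty (Fin d)] (a b : Fin d → ℝ) : dot a b = 0 := by
  simp [dot]

theorem dot_smul_left (c : ℝ) (a b : Fin d → ℝ) : dot (c • a) b = c * dot a b := by
  simp only [dot_eq_dotProduct, smul_dotProduct, smul_eq_mul]

theorem dot_transpose_sub_one_mulVec (M : Matrix (Fin d) (Fin d) ℝ) (y z : Fin d → ℝ) :
    dot ((M - 1)ᵀ *ᵥ y) z = dot y (M *ᵥ z) - dot y z := by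
  simp only [dot_eq_dotProduct, Matrix.mulVec_transpose, ← Matrix.dotProduct_mulVec,
    Matrix.sub_mulVec, Matrix.one_mulVec, dotProduct_sub]

theorem abs_transpose_mulVec_apply_le (A : Matrix (Fin d) (Fin d) ℝ) {y : Fin d → ℝ}
    (hy : ∀ j, |y j| ≤ 1) (i : Fin d) : |(Aᵀ *ᵥ y) i| ≤ ∑ j, |A j i| :=
  calc |(Aᵀ *ᵥ y) i| = |∑ j, A j i * y j| := rfl
    _ ≤ ∑ j, |A j i * y j| := abs_sum_le_sum_abs _ _
    _ ≤ ∑ j, |A j i| := sum_le_sum fun j _ => by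
        rw [abs_mul]
        exact mul_le_of_le_one_right (abs_nonneg _) (hy j)

theorem sum_abs_sub_one_apply_le (M : Matrix (Fin d) (Fin d) ℝ) (i : Fin d) :
    ∑ j, |(M - 1) j i| ≤ ∑ j, |M j i| + 1 :=
  calc ∑ j, |(M - 1) j i| ≤ ∑ j, (|M j i| + |(1 : Matrix (Fin d) (Fin d) ℝ) j i|) :=
        sum_le_sum fun j _ => abs_sub _ _
    _ = ∑ j, |M j i| + 1 := by
        simp [sum_add_distrib, Matrix.one_apply, apply_ite (fun a : ℝ => |a|)]

theorem add_one_pos_of_sum_abs_le {M : Matrix (Fin d) (Fin d) ℝ} {lam : ℝ}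
    (hlam : ∀ j, ∑ i, |M i j| ≤ lam) (j : Fin d) : 0 < lam + 1 := by
  linarith [hlam j, sum_nonneg fun i (_ : i ∈ univ) => abs_nonneg (M i j)]

theorem abs_smul_transpose_sub_one_mulVec_apply_le (M : Matrix (Fin d) (Fin d) ℝ) {lam : ℝ}
    (hlam : ∀ j, ∑ i, |M i j| ≤ lam) {y : Fin d → ℝ} (hy : ∀ j, |y j| ≤ 1) (i : Fin d) :
    |((1 / (lam + 1)) • (M - 1)ᵀ *ᵥ y) i| ≤ 1 := by
  have hpos := add_one_pos_of_sum_abs_le hlam i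
  have hbound : |((M - 1)ᵀ *ᵥ y) i| ≤ lam + 1 :=
    (abs_transpose_mulVec_apply_le _ hy i).trans <|
      (sum_abs_sub_one_apply_le M i).trans (by linarith [hlam i])
  rw [Pi.smul_apply, smul_eq_mul, abs_mul, abs_of_pos (one_div_pos.2 hpos), one_div,
    inv_mul_le_one₀ hpos]
  exact hbound

theorem dot_transpose_sub_one_mulVec_nonpos {P : Set (Fin d → ℝ)}
    {M : Matrix (Fin d) (Fin d) ℝ} (hM : ∀ x ∈ P, M *ᵥ x ∈ P) {y z : Fin d → ℝ} (hz : z ∈ P)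
    (hmax : ∀ z' ∈ P, dot y z' ≤ dot y z) : dot ((M - 1)ᵀ *ᵥ y) z ≤ 0 := by
  rw [dot_transpose_sub_one_mulVec]
  linarith [hmax _ (hM z hz)]

theorem sum_dot_smul_transpose_sub_one_mulVec {ι : Type*} [Fintype ι] (c : ℝ)
    (M : Matrix (Fin d) (Fin d) ℝ) (r x : ι → Fin d → ℝ) :
    ∑ t, dot (c • (M - 1)ᵀ *ᵥ r t) (x t) =
      c * ((∑ t, dot (r t) (M *ᵥ x t)) - ∑ t, dot (r t) (x t)) := by
  simp only [dot_smul_left, dot_transpose_sub_one_mulVec, ← sum_sub_distrib, mul_sum]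

end

theorem stmt16_general (d T : ℕ) (V : Finset (Fin d → ℝ))
    (M : Matrix (Fin d) (Fin d) ℝ)
    (hMP : ∀ x ∈ convexHull ℝ (V : Set (Fin d → ℝ)),
      M.mulVec x ∈ convexHull ℝ (V : Set (Fin d → ℝ)))
    (lam : ℝ) (hlam : ∀ j, ∑ i, |M i j| ≤ lam)
    (r x : Fin T → Fin d → ℝ)
    (R : ℝ)
    (hR : (∑ t, dot (r t) (M.mulVec (x t))) - (∑ t, dot (r t) (x t)) = R) :
    (∀ y : Fin d → ℝ, (∀ i, |y i| ≤ 1) →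
      ∀ i, |((1 / (lam + 1)) • (Matrix.transpose (M - 1)).mulVec y) i| ≤ 1) ∧
    (∀ y : Fin d → ℝ, (∀ i, |y i| ≤ 1) →
      ∀ z ∈ convexHull ℝ (V : Set (Fin d → ℝ)),
        (∀ z' ∈ convexHull ℝ (V : Set (Fin d → ℝ)), dot y z' ≤ dot y z) →
        dot ((1 / (lam + 1)) • (Matrix.transpose (M - 1)).mulVec y) z ≤ 0) ∧
    (∑ t, dot ((1 / (lam + 1)) • (Matrix.transpose (M - 1)).mulVec (r t)) (x t)) = R / (lam + 1) := by
  refine ⟨fun y hy => abs_smul_transpose_sub_one_mulVec_apply_le M hlam hy,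
    fun y _ z hz hmax => ?_, ?_⟩
  · -- for `d = 0` nothing bounds `lam`, but then every `dot` vanishes
    rcases isEmpty_or_nonempty (Fin d) with _ | ⟨⟨j⟩⟩
    · exact (dot_of_isEmpty _ _).le
    rw [dot_smul_left]
    exact mul_nonpos_of_nonneg_of_nonpos (one_div_pos.2 (add_one_pos_of_sum_abs_le hlam j)).le
      (dot_transpose_sub_one_mulVec_nonpos hMP hz hmax)
  · rw [sum_dot_smul_transpose_sub_one_mulVec, hR, one_div_mul_eq_div]

theorem stmt16 (d T : ℕ) (V : Finset (Fin d → ℝ))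
    (hV : ∀ v ∈ V, ∀ i, |v i| ≤ 1)
    (M : Matrix (Fin d) (Fin d) ℝ)
    (hMP : ∀ x ∈ convexHull ℝ (V : Set (Fin d → ℝ)),
      M.mulVec x ∈ convexHull ℝ (V : Set (Fin d → ℝ)))
    (lam : ℝ) (hlam : ∀ j, ∑ i, |M i j| ≤ lam)
    (r x : Fin T → Fin d → ℝ) (hr : ∀ t i, |r t i| ≤ 1)
    (hx : ∀ t, x t ∈ convexHull ℝ (V : Set (Fin d → ℝ)))
    (R : ℝ)
    (hR : (∑ t, dot (r t) (M.mulVec (x t))) - (∑ t, dot (r t) (x t)) = R) :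
    (∀ y : Fin d → ℝ, (∀ i, |y i| ≤ 1) →
      ∀ i, |((1 / (lam + 1)) • (Matrix.transpose (M - 1)).mulVec y) i| ≤ 1) ∧
    (∀ y : Fin d → ℝ, (∀ i, |y i| ≤ 1) →
      ∀ z ∈ convexHull ℝ (V : Set (Fin d → ℝ)),
        (∀ z' ∈ convexHull ℝ (V : Set (Fin d → ℝ)), dot y z' ≤ dot y z) →
        dot ((1 / (lam + 1)) • (Matrix.transpose (M - 1)).mulVec y) z ≤ 0) ∧
    (∑ t, dot ((1 / (lam + 1)) • (Matrix.transpose (M - 1)).mulVec (r t)) (x t)) = R / (lam + 1) :=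
  stmt16_general d T V M hMP lam hlam r x R hR
end
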